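/- arXiv:2102.09850 — 3 statements merged into one kernel-verified Lean document; each statement's English description precedes it below -/
import Mathlib

section
/- (Model Error Bound) Let X = X_1 × ⋯ × X_d be a finite factored state space with per-coordinate kernels P_i and full factored kernel P(x̄ | x, a) = ∏_{i=1}^d P_i(x̄_i | x, a). Suppose each abstraction φ_i : X → S_i is ε_i-approximately model-invariant, and let φ(x) = (φ_1(x),…,φ_d(x)). Fix a ∈ A, an abstract state s in the image of φ, and a probability distribution p on X supported on φ^{-1}(s), and define the abstract transition distribution P_φ(s, a)(x̄) = Σ_{x ∈ φ^{-1}(s)} p(x) P(x̄ | x, a). Then for every x ∈ φ^{-1}(s), Σ_{x̄ ∈ X} |P_φ(s, a)(x̄) − P(x̄ | x, a)| ≤ Σ_{i=1}^d ε_i. -/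
/-!
Both distributions in the bound are compared through their overlap `∑ min(p, q)`, which
satisfies `‖p - q‖₁ = 2 - 2 ∑ min(p, q)`. The overlap of two product distributions is at
least the product of the coordinatewise overlaps, and the Weierstrass product inequality
`∏ uᵢ ≥ 1 - ∑ (1 - uᵢ)` turns this into `‖∏ fᵢ - ∏ gᵢ‖₁ ≤ ∑ ‖fᵢ - gᵢ‖₁`. For `x'` and `x` in the
same fibre of `φ`, each coordinate term is at most `εᵢ`, and `P_φ(s, a)` is a convex
combination of such `P(· | x', a)`, so convexity of the L1 distance finishes the proof.
-/

open Finset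

theorem Finset.one_sub_sum_one_sub_le_prod {ι R : Type*} [CommRing R] [PartialOrder R]
    [IsOrderedRing R] (s : Finset ι) {u : ι → R} (h0 : ∀ i ∈ s, 0 ≤ u i)
    (h1 : ∀ i ∈ s, u i ≤ 1) : 1 - ∑ i ∈ s, (1 - u i) ≤ ∏ i ∈ s, u i := by
  classical
  induction s using Finset.induction_on with
  | empty => simp
  | insert b s hb ih =>
    have hb0 := h0 b (mem_insert_self b s)
    have hb1 := h1 b (mem_insert_self b s)
    have hS : 0 ≤ ∑ i ∈ s, (1 - u i) :=
      sum_nonneg fun i hi => sub_nonneg.mpr (h1 i (mem_insert_of_mem hi))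
    have hP := ih (fun i hi => h0 i (mem_insert_of_mem hi))
      (fun i hi => h1 i (mem_insert_of_mem hi))
    rw [sum_insert hb, prod_insert hb]
    calc 1 - ((1 - u b) + ∑ i ∈ s, (1 - u i)) = u b - ∑ i ∈ s, (1 - u i) := by ring
      _ ≤ u b - u b * ∑ i ∈ s, (1 - u i) := sub_le_sub_left (mul_le_of_le_one_left hS hb1) _
      _ = u b * (1 - ∑ i ∈ s, (1 - u i)) := by ring
      _ ≤ u b * ∏ i ∈ s, u i := mul_le_mul_of_nonneg_left hP hb0

theorem sum_abs_sub_eq_sum_add_sum_sub_two_mul_sum_min {α : Type*} [Fintype α] (f g : α → ℝ) :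
    ∑ v, |f v - g v| = ∑ v, f v + ∑ v, g v - 2 * ∑ v, min (f v) (g v) := by
  have hpt : ∀ v, |f v - g v| = f v + g v - 2 * min (f v) (g v) := fun v => by
    rw [← max_sub_min_eq_abs', ← min_add_max (f v) (g v)]; ring
  simp only [hpt, sum_sub_distrib, sum_add_distrib, mul_sum]

theorem sum_abs_prod_sub_prod_le {ι : Type*} [Fintype ι] [DecidableEq ι] {X : ι → Type*}
    [∀ i, Fintype (X i)] (f g : ∀ i, X i → ℝ) (hf0 : ∀ i v, 0 ≤ f i v) (hg0 : ∀ i v, 0 ≤ g i v)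
    (hf1 : ∀ i, ∑ v, f i v = 1) (hg1 : ∀ i, ∑ v, g i v = 1) :
    ∑ y : ∀ i, X i, |∏ i, f i (y i) - ∏ i, g i (y i)| ≤ ∑ i, ∑ v, |f i v - g i v| := by
  set m : ι → ℝ := fun i => ∑ v, min (f i v) (g i v)
  have hm1 : ∀ i, m i ≤ 1 := fun i =>
    (sum_le_sum fun v _ => min_le_left _ _).trans_eq (hf1 i)
  have hm0 : ∀ i, 0 ≤ m i := fun i => sum_nonneg fun v _ => le_min (hf0 i v) (hg0 i v)
  have hprod_min_le : ∀ y : ∀ i, X i,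
      ∏ i, min (f i (y i)) (g i (y i)) ≤ min (∏ i, f i (y i)) (∏ i, g i (y i)) := fun y =>
    le_min (prod_le_prod (fun i _ => le_min (hf0 i _) (hg0 i _)) fun i _ => min_le_left _ _)
      (prod_le_prod (fun i _ => le_min (hf0 i _) (hg0 i _)) fun i _ => min_le_right _ _)
  have hoverlap : ∏ i, m i ≤ ∑ y : ∀ i, X i, min (∏ i, f i (y i)) (∏ i, g i (y i)) := by
    rw [Fintype.prod_sum]
    exact sum_le_sum fun y _ => hprod_min_le y
  calc ∑ y : ∀ i, X i, |∏ i, f i (y i) - ∏ i, g i (y i)|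
      = 2 - 2 * ∑ y : ∀ i, X i, min (∏ i, f i (y i)) (∏ i, g i (y i)) := by
        rw [sum_abs_sub_eq_sum_add_sum_sub_two_mul_sum_min, ← Fintype.prod_sum,
          ← Fintype.prod_sum]
        simp only [hf1, hg1, prod_const_one]
        norm_num
    _ ≤ 2 * ∑ i, (1 - m i) := by
        linarith [hoverlap, one_sub_sum_one_sub_le_prod univ (fun i _ => hm0 i) fun i _ => hm1 i]
    _ = ∑ i, ∑ v, |f i v - g i v| := by
        rw [mul_sum]
        refine sum_congr rfl fun i _ => ?_
        rw [sum_abs_sub_eq_sum_add_sum_sub_two_mul_sum_min, hf1, hg1]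
        ring

theorem sum_abs_sum_mul_sub_le {κ α : Type*} [Fintype α] (s : Finset κ) {w : κ → ℝ}
    (hw0 : ∀ k ∈ s, 0 ≤ w k) (hw1 : ∑ k ∈ s, w k = 1) (f : κ → α → ℝ) (g : α → ℝ) {C : ℝ}
    (hC : ∀ k ∈ s, ∑ y, |f k y - g y| ≤ C) :
    ∑ y, |∑ k ∈ s, w k * f k y - g y| ≤ C := by
  have hmix : ∀ y, ∑ k ∈ s, w k * f k y - g y = ∑ k ∈ s, w k * (f k y - g y) := fun y => by
    simp only [mul_sub, sum_sub_distrib, ← sum_mul, hw1, one_mul]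
  calc ∑ y, |∑ k ∈ s, w k * f k y - g y|
      ≤ ∑ y, ∑ k ∈ s, w k * |f k y - g y| := sum_le_sum fun y _ => by
        rw [hmix]
        refine (abs_sum_le_sum_abs _ _).trans_eq (sum_congr rfl fun k hk => ?_)
        rw [abs_mul, abs_of_nonneg (hw0 k hk)]
    _ = ∑ k ∈ s, w k * ∑ y, |f k y - g y| := by
        rw [sum_comm]
        simp only [mul_sum]
    _ ≤ ∑ k ∈ s, w k * C :=
        sum_le_sum fun k hk => mul_le_mul_of_nonneg_left (hC k hk) (hw0 k hk)
    _ = C := by rw [← sum_mul, hw1, one_mul]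

theorem model_error_bound_general
    {d : ℕ} (Xs : Fin d → Type) [∀ j, Fintype (Xs j)]
    (A : Type)
    (Si : Fin d → Type) [∀ i, DecidableEq (Si i)]
    (P : ∀ i, (∀ j, Xs j) → A → Xs i → ℝ)
    (hP_nonneg : ∀ i x a v, 0 ≤ P i x a v)
    (hP_sum : ∀ i x a, ∑ v, P i x a v = 1)
    (ε : Fin d → ℝ)
    (φ : ∀ i, (∀ j, Xs j) → Si i)
    (hφ : ∀ i (x₁ x₂ : ∀ j, Xs j) (a : A), φ i x₁ = φ i x₂ →
      ∑ v, |P i x₁ a v - P i x₂ a v| ≤ ε i)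
    (a : A) (s : ∀ i, Si i)
    (p : (∀ j, Xs j) → ℝ)
    (hp_nonneg : ∀ x, 0 ≤ p x)
    (hp_sum : ∑ x, p x = 1)
    (hp_supp : ∀ x : ∀ j, Xs j, (fun i => φ i x) ≠ s → p x = 0) :
    ∀ x : ∀ j, Xs j, (fun i => φ i x) = s →
      ∑ xbar : ∀ j, Xs j,
        |(∑ x' ∈ Finset.univ.filter (fun x' => (fun i => φ i x') = s),
            p x' * ∏ i, P i x' a (xbar i))
          - ∏ i, P i x a (xbar i)| ≤ ∑ i, ε i := by
  intro x hx
  have hpF : ∑ x' ∈ univ.filter (fun x' => (fun i => φ i x') = s), p x' = 1 := by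
    rw [← hp_sum]
    exact sum_subset (subset_univ _) fun y _ hy => hp_supp y (by simpa using hy)
  refine sum_abs_sum_mul_sub_le _ (fun x' _ => hp_nonneg x') hpF _ _ fun x' hx' => ?_
  have hx' : (fun i => φ i x') = s := (mem_filter.mp hx').2
  calc _ ≤ ∑ i, ∑ v, |P i x' a v - P i x a v| :=
        sum_abs_prod_sub_prod_le (fun i => P i x' a) (fun i => P i x a)
          (fun i => hP_nonneg i x' a) (fun i => hP_nonneg i x a)
          (fun i => hP_sum i x' a) (fun i => hP_sum i x a)
    _ ≤ ∑ i, ε i := sum_le_sum fun i _ =>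
        hφ i x' x a (congrFun (hx'.trans hx.symm) i)

/-- Model Error Bound: If each per-coordinate abstraction `φ i` is
`ε i`-approximately model-invariant, then for any abstract state `s`, any distribution `p`
supported on `φ⁻¹(s)`, and any `x ∈ φ⁻¹(s)`, the L1 distance between the induced abstract
transition distribution `P_φ(s, a)` and the full factored next-state distribution `P(· | x, a)`
is at most `∑ i, ε i`. -/
theorem model_error_bound
    {d : ℕ} (Xs : Fin d → Type) [∀ j, Fintype (Xs j)] [∀ j, Nonempty (Xs j)]
    (A : Type) [Fintype A] [Nonempty A]
    (Si : Fin d → Type) [∀ i, DecidableEq (Si i)]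
    (P : ∀ i, (∀ j, Xs j) → A → Xs i → ℝ)
    (hP_nonneg : ∀ i x a v, 0 ≤ P i x a v)
    (hP_sum : ∀ i x a, ∑ v, P i x a v = 1)
    (ε : Fin d → ℝ)
    (φ : ∀ i, (∀ j, Xs j) → Si i)
    (hφ : ∀ i (x₁ x₂ : ∀ j, Xs j) (a : A), φ i x₁ = φ i x₂ →
      ∑ v, |P i x₁ a v - P i x₂ a v| ≤ ε i)
    (a : A) (s : ∀ i, Si i)
    (p : (∀ j, Xs j) → ℝ)
    (hp_nonneg : ∀ x, 0 ≤ p x)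
    (hp_sum : ∑ x, p x = 1)
    (hp_supp : ∀ x : ∀ j, Xs j, (fun i => φ i x) ≠ s → p x = 0)
    (hs : ∃ x : ∀ j, Xs j, (fun i => φ i x) = s) :
    ∀ x : ∀ j, Xs j, (fun i => φ i x) = s →
      ∑ xbar : ∀ j, Xs j,
        |(∑ x' ∈ Finset.univ.filter (fun x' => (fun i => φ i x') = s),
            p x' * ∏ i, P i x' a (xbar i))
          - ∏ i, P i x a (xbar i)| ≤ ∑ i, ε i :=
  model_error_bound_general Xs A Si P hP_nonneg hP_sum ε φ hφ a s p hp_nonneg hp_sum hp_supp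
end

section
/- (Value bound, first inequality) Let X and A be finite nonempty sets, P : X × A → (X → ℝ) a transition kernel (P(x' | x, a) ≥ 0, Σ_{x'} P(x' | x, a) = 1), r : X × A → ℝ a reward function, and γ ∈ (0,1). Let T be the Bellman optimality operator (TQ)(x, a) = r(x, a) + γ Σ_{x'} P(x' | x, a) max_{a'} Q(x', a'), and let Q* : X × A → ℝ satisfy Q* = T Q*. Let μ be a probability distribution on X × A, C > 0, and let D be a nonempty set of probability distributions on X × A such that: (i) for every ν ∈ D and every (x, a), ν(x, a) ≤ C · μ(x, a); and (ii) for every ν ∈ D and every function σ : X → A, the distribution ν_σ defined by ν_σ(x', a') = Σ_{(x,a)} ν(x, a) P(x' | x, a) · 1[a' = σ(x')] also belongs to D. Then for every Q : X × A → ℝ and every ν ∈ D, ‖Q − Q*‖_{2,ν} ≤ (√C / (1 − γ)) · ‖Q − TQ‖_{2,μ}. -/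
/-!
Write `f = Q - Q*`. Since `Q* = TQ*`, `f = (Q - TQ) + (TQ - TQ*)`. If `σ` picks in every state an
action maximising `|f(x', ·)|`, then `|TQ - TQ*|(x, a) ≤ γ Σ_{x'} P(x' | x, a) |f(x', σ x')|`, and
Jensen's inequality turns this into `‖TQ - TQ*‖_{2,ν} ≤ γ ‖f‖_{2,ν_σ}`. With concentratability,
`‖f‖_{2,ν} ≤ √C ε + γ ‖f‖_{2,ν_σ}` where `ε = ‖Q - TQ‖_{2,μ}` and `ν_σ ∈ D`. Concentratability also
bounds `‖f‖_{2,ν}` uniformly on `D`, so the supremum `M` over `D` is finite and `M ≤ √C ε + γ M`.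
-/

/-- The Bellman optimality operator of a finite MDP:
`(TQ)(x, a) = r(x, a) + γ Σ_{x'} P(x' | x, a) max_{a'} Q(x', a')`. -/
def bellmanOpt {X A : Type} [Fintype X] [Fintype A] [Nonempty A]
    (P : X → A → X → ℝ) (r : X → A → ℝ) (γ : ℝ) (Q : X → A → ℝ) : X → A → ℝ :=
  fun x a => r x a + γ * ∑ x', P x a x' *
    Finset.univ.sup' Finset.univ_nonempty (fun a' => Q x' a')

/-- The weighted 2-norm `‖f‖_{2,ν} = (Σ_{(x,a)} ν(x,a) f(x,a)²)^{1/2}`. -/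
noncomputable def norm2 {X A : Type} [Fintype X] [Fintype A] (ν : X × A → ℝ) (f : X → A → ℝ) : ℝ :=
  Real.sqrt (∑ p : X × A, ν p * (f p.1 p.2) ^ 2)

open Finset

section WeightedNorm

variable {X A : Type} [Fintype X] [Fintype A] {ν μ : X × A → ℝ}

lemma norm2_eq_norm_toLp (hν : ∀ p, 0 ≤ ν p) (f : X → A → ℝ) :
    norm2 ν f = ‖WithLp.toLp 2 (fun p : X × A => √(ν p) * f p.1 p.2)‖ := by
  rw [EuclideanSpace.norm_eq, norm2]
  simp [mul_pow, Real.sq_sqrt (hν _)]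

lemma norm2_add_le (hν : ∀ p, 0 ≤ ν p) (g h : X → A → ℝ) :
    norm2 ν (fun x a => g x a + h x a) ≤ norm2 ν g + norm2 ν h := by
  simp only [norm2_eq_norm_toLp hν, mul_add]
  exact norm_add_le (E := EuclideanSpace ℝ (X × A)) (WithLp.toLp 2 fun p => √(ν p) * g p.1 p.2)
    (WithLp.toLp 2 fun p => √(ν p) * h p.1 p.2)

lemma norm2_le_sqrt_mul_norm2 {C : ℝ} (hμ : ∀ p, 0 ≤ μ p) (hνμ : ∀ p, ν p ≤ C * μ p)
    (f : X → A → ℝ) : norm2 ν f ≤ √C * norm2 μ f := by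
  rw [norm2, norm2, ← Real.sqrt_mul' _ (sum_nonneg fun p _ => mul_nonneg (hμ p) (sq_nonneg _)),
    mul_sum]
  refine Real.sqrt_le_sqrt (sum_le_sum fun p _ => ?_)
  rw [← mul_assoc]
  exact mul_le_mul_of_nonneg_right (hνμ p) (sq_nonneg _)

lemma norm2_le_mul_norm2_of_sum_le {ν' : X × A → ℝ} {γ : ℝ} (hγ : 0 ≤ γ) {g f : X → A → ℝ}
    (h : ∑ p, ν p * g p.1 p.2 ^ 2 ≤ γ ^ 2 * ∑ p, ν' p * f p.1 p.2 ^ 2) :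
    norm2 ν g ≤ γ * norm2 ν' f := by
  rw [norm2, norm2, ← Real.sqrt_sq hγ, ← Real.sqrt_mul (sq_nonneg γ)]
  exact Real.sqrt_le_sqrt h

end WeightedNorm

lemma sup'_sub_sup'_le_of_forall_sub_le {ι : Type*} {s : Finset ι} (hs : s.Nonempty)
    {u v : ι → ℝ} {c : ℝ} (h : ∀ i ∈ s, u i - v i ≤ c) : s.sup' hs u - s.sup' hs v ≤ c := by
  rw [sub_le_iff_le_add]
  refine sup'_le hs u fun i hi => ?_
  linarith [h i hi, le_sup' v hi]

lemma abs_sup'_sub_sup'_le_of_forall_abs_sub_le {ι : Type*} {s : Finset ι} (hs : s.Nonempty)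
    {u v : ι → ℝ} {c : ℝ} (h : ∀ i ∈ s, |u i - v i| ≤ c) :
    |s.sup' hs u - s.sup' hs v| ≤ c :=
  abs_sub_le_iff.2
    ⟨sup'_sub_sup'_le_of_forall_sub_le hs fun i hi => (abs_sub_le_iff.1 (h i hi)).1,
     sup'_sub_sup'_le_of_forall_sub_le hs fun i hi => (abs_sub_le_iff.1 (h i hi)).2⟩

lemma sq_sum_mul_le_sum_mul_sq {ι : Type*} (s : Finset ι) {w h : ι → ℝ}
    (hw : ∀ i ∈ s, 0 ≤ w i) (hw1 : ∑ i ∈ s, w i = 1) :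
    (∑ i ∈ s, w i * h i) ^ 2 ≤ ∑ i ∈ s, w i * h i ^ 2 := by
  have := sum_sq_le_sum_mul_sum_of_sq_le_mul s (r := fun i => w i * h i) hw
    (fun i hi => mul_nonneg (hw i hi) (sq_nonneg (h i))) (fun i _ => le_of_eq (by ring))
  rwa [hw1, one_mul] at this

lemma le_div_one_sub_of_forall_exists_le {ι : Type*} {D : Set ι} {g : ι → ℝ} {a γ : ℝ}
    (hbdd : BddAbove (g '' D)) (hγ0 : 0 ≤ γ) (hγ1 : γ < 1)
    (hstep : ∀ i ∈ D, ∃ j ∈ D, g i ≤ a + γ * g j) : ∀ i ∈ D, g i ≤ a / (1 - γ) := by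
  intro i hi
  have hle_sup : ∀ j ∈ D, g j ≤ sSup (g '' D) := fun j hj => le_csSup hbdd ⟨j, hj, rfl⟩
  have hsup : sSup (g '' D) ≤ a + γ * sSup (g '' D) := by
    refine csSup_le ⟨g i, i, hi, rfl⟩ ?_
    rintro _ ⟨j, hj, rfl⟩
    obtain ⟨k, hk, hjk⟩ := hstep j hj
    exact hjk.trans (by gcongr; exact hle_sup k hk)
  rw [le_div_iff₀ (sub_pos.2 hγ1)]
  nlinarith [hle_sup i hi]

section PolicyStep

variable {X A : Type} [Fintype X] [Fintype A] [DecidableEq A]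

/-- The paper's `ν_σ`: the law of `(x', σ x')` when `(x, a) ∼ ν` and `x' ∼ P(· | x, a)`. -/
def policyStep (P : X → A → X → ℝ) (σ : X → A) (ν : X × A → ℝ) : X × A → ℝ :=
  fun p => ∑ q : X × A, ν q * P q.1 q.2 p.1 * (if p.2 = σ p.1 then (1 : ℝ) else 0)

lemma sum_policyStep_mul (P : X → A → X → ℝ) (σ : X → A) (ν g : X × A → ℝ) :
    ∑ p, policyStep P σ ν p * g p = ∑ q, ν q * ∑ x', P q.1 q.2 x' * g (x', σ x') := by
  simp only [policyStep, sum_mul, mul_sum]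
  rw [sum_comm]
  refine sum_congr rfl fun q _ => ?_
  rw [Fintype.sum_prod_type]
  refine sum_congr rfl fun x' _ => ?_
  simp [mul_assoc]

end PolicyStep

section Bellman

variable {X A : Type} [Fintype X] [Fintype A] [Nonempty A]
  {P : X → A → X → ℝ} {r : X → A → ℝ} {γ : ℝ} {Q Q' : X → A → ℝ} {σ : X → A}

lemma bellmanOpt_sub_bellmanOpt (P : X → A → X → ℝ) (r : X → A → ℝ) (γ : ℝ)
    (Q Q' : X → A → ℝ) (x : X) (a : A) :
    bellmanOpt P r γ Q x a - bellmanOpt P r γ Q' x a =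
      γ * ∑ x', P x a x' * (univ.sup' univ_nonempty (Q x') - univ.sup' univ_nonempty (Q' x')) := by
  simp only [bellmanOpt, add_sub_add_left_eq_sub, ← mul_sub, ← sum_sub_distrib]

lemma abs_bellmanOpt_sub_le (hP : ∀ x a x', 0 ≤ P x a x') (hγ : 0 ≤ γ)
    (hσ : ∀ x a, |Q x a - Q' x a| ≤ |Q x (σ x) - Q' x (σ x)|) (x : X) (a : A) :
    |bellmanOpt P r γ Q x a - bellmanOpt P r γ Q' x a| ≤
      γ * ∑ x', P x a x' * |Q x' (σ x') - Q' x' (σ x')| := by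
  rw [bellmanOpt_sub_bellmanOpt, abs_mul, abs_of_nonneg hγ]
  gcongr
  refine (abs_sum_le_sum_abs _ _).trans (sum_le_sum fun x' _ => ?_)
  rw [abs_mul, abs_of_nonneg (hP x a x')]
  exact mul_le_mul_of_nonneg_left
    (abs_sup'_sub_sup'_le_of_forall_abs_sub_le _ fun a' _ => hσ x' a') (hP x a x')

lemma sq_bellmanOpt_sub_le (hP : ∀ x a x', 0 ≤ P x a x') (hP_sum : ∀ x a, ∑ x', P x a x' = 1)
    (hγ : 0 ≤ γ) (hσ : ∀ x a, |Q x a - Q' x a| ≤ |Q x (σ x) - Q' x (σ x)|) (x : X) (a : A) :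
    (bellmanOpt P r γ Q x a - bellmanOpt P r γ Q' x a) ^ 2 ≤
      γ ^ 2 * ∑ x', P x a x' * (Q x' (σ x') - Q' x' (σ x')) ^ 2 := by
  calc _ = |bellmanOpt P r γ Q x a - bellmanOpt P r γ Q' x a| ^ 2 := (sq_abs _).symm
    _ ≤ (γ * ∑ x', P x a x' * |Q x' (σ x') - Q' x' (σ x')|) ^ 2 := by
      gcongr
      exact abs_bellmanOpt_sub_le hP hγ hσ x a
    _ = γ ^ 2 * (∑ x', P x a x' * |Q x' (σ x') - Q' x' (σ x')|) ^ 2 := mul_pow _ _ _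
    _ ≤ _ := by
      gcongr
      simpa only [sq_abs] using sq_sum_mul_le_sum_mul_sq univ (h := fun x' => |Q x' (σ x') - Q' x' (σ x')|)
        (fun x' _ => hP x a x') (hP_sum x a)

variable [DecidableEq A] {ν : X × A → ℝ}

lemma norm2_bellmanOpt_sub_le (hν : ∀ p, 0 ≤ ν p) (hP : ∀ x a x', 0 ≤ P x a x')
    (hP_sum : ∀ x a, ∑ x', P x a x' = 1) (hγ : 0 ≤ γ)
    (hσ : ∀ x a, |Q x a - Q' x a| ≤ |Q x (σ x) - Q' x (σ x)|) :
    norm2 ν (fun x a => bellmanOpt P r γ Q x a - bellmanOpt P r γ Q' x a) ≤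
      γ * norm2 (policyStep P σ ν) (fun x a => Q x a - Q' x a) := by
  refine norm2_le_mul_norm2_of_sum_le hγ ?_
  rw [sum_policyStep_mul, mul_sum]
  refine sum_le_sum fun q _ => ?_
  rw [mul_left_comm]
  exact mul_le_mul_of_nonneg_left (sq_bellmanOpt_sub_le hP hP_sum hγ hσ q.1 q.2) (hν q)

lemma norm2_sub_fixedPoint_le {Qstar : X → A → ℝ}
    (hQstar : ∀ x a, Qstar x a = bellmanOpt P r γ Qstar x a) (hν : ∀ p, 0 ≤ ν p)
    (hP : ∀ x a x', 0 ≤ P x a x') (hP_sum : ∀ x a, ∑ x', P x a x' = 1) (hγ : 0 ≤ γ)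
    (hσ : ∀ x a, |Q x a - Qstar x a| ≤ |Q x (σ x) - Qstar x (σ x)|) :
    norm2 ν (fun x a => Q x a - Qstar x a) ≤
      norm2 ν (fun x a => Q x a - bellmanOpt P r γ Q x a) +
        γ * norm2 (policyStep P σ ν) (fun x a => Q x a - Qstar x a) :=
  calc norm2 ν (fun x a => Q x a - Qstar x a)
      = norm2 ν (fun x a => (Q x a - bellmanOpt P r γ Q x a) +
          (bellmanOpt P r γ Q x a - bellmanOpt P r γ Qstar x a)) := by
        congr 1
        funext x a
        linear_combination -hQstar x a
    _ ≤ _ := norm2_add_le hν _ _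
    _ ≤ _ := by
      gcongr
      exact norm2_bellmanOpt_sub_le hν hP hP_sum hγ hσ

end Bellman

theorem value_bound_first_inequality_general
    (X A : Type) [Fintype X] [Fintype A] [Nonempty A] [DecidableEq A]
    (P : X → A → X → ℝ)
    (hP_nonneg : ∀ x a x', 0 ≤ P x a x')
    (hP_sum : ∀ x a, ∑ x', P x a x' = 1)
    (r : X → A → ℝ) (γ : ℝ) (hγ0 : 0 < γ) (hγ1 : γ < 1)
    (Qstar : X → A → ℝ)
    (hQstar : ∀ x a, Qstar x a = bellmanOpt P r γ Qstar x a)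
    (μ : X × A → ℝ) (hμ_nonneg : ∀ p, 0 ≤ μ p)
    (C : ℝ)
    (D : Set (X × A → ℝ))
    (hD_prob : ∀ ν ∈ D, (∀ p, 0 ≤ ν p) ∧ ∑ p, ν p = 1)
    (hD_conc : ∀ ν ∈ D, ∀ p, ν p ≤ C * μ p)
    (hD_closed : ∀ ν ∈ D, ∀ σ : X → A,
      (fun p : X × A => ∑ q : X × A,
        ν q * P q.1 q.2 p.1 * (if p.2 = σ p.1 then (1 : ℝ) else 0)) ∈ D) :
    ∀ (Q : X → A → ℝ) (ν : X × A → ℝ), ν ∈ D →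
      norm2 ν (fun x a => Q x a - Qstar x a) ≤
        (Real.sqrt C / (1 - γ)) *
          norm2 μ (fun x a => Q x a - bellmanOpt P r γ Q x a) := by
  intro Q ν hν
  choose σ hσ using fun x => Finite.exists_max fun a => |Q x a - Qstar x a|
  have hbdd : BddAbove ((fun ν' => norm2 ν' fun x a => Q x a - Qstar x a) '' D) :=
    ⟨√C * norm2 μ fun x a => Q x a - Qstar x a, by
      rintro _ ⟨ν', hν', rfl⟩
      exact norm2_le_sqrt_mul_norm2 hμ_nonneg (hD_conc ν' hν') _⟩
  rw [div_mul_eq_mul_div]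
  refine le_div_one_sub_of_forall_exists_le hbdd hγ0.le hγ1
    (fun ν' hν' => ⟨policyStep P σ ν', hD_closed ν' hν' σ, ?_⟩) ν hν
  calc _ ≤ _ := norm2_sub_fixedPoint_le hQstar (hD_prob ν' hν').1 hP_nonneg hP_sum hγ0.le hσ
    _ ≤ _ := by
      gcongr
      exact norm2_le_sqrt_mul_norm2 hμ_nonneg (hD_conc ν' hν') _

/-- Value bound, first inequality: under the concentratability assumption with
coefficient `C` for a family `D` of admissible distributions closed under one-step pushforward
by deterministic policies, for every `Q` and every `ν ∈ D`,
`‖Q − Q*‖_{2,ν} ≤ (√C / (1 − γ)) · ‖Q − TQ‖_{2,μ}`. -/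
theorem value_bound_first_inequality
    (X A : Type) [Fintype X] [Fintype A] [Nonempty X] [Nonempty A] [DecidableEq A]
    (P : X → A → X → ℝ)
    (hP_nonneg : ∀ x a x', 0 ≤ P x a x')
    (hP_sum : ∀ x a, ∑ x', P x a x' = 1)
    (r : X → A → ℝ) (γ : ℝ) (hγ0 : 0 < γ) (hγ1 : γ < 1)
    (Qstar : X → A → ℝ)
    (hQstar : ∀ x a, Qstar x a = bellmanOpt P r γ Qstar x a)
    (μ : X × A → ℝ) (hμ_nonneg : ∀ p, 0 ≤ μ p) (hμ_sum : ∑ p, μ p = 1)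
    (C : ℝ) (hC : 0 < C)
    (D : Set (X × A → ℝ)) (hD_ne : D.Nonempty)
    (hD_prob : ∀ ν ∈ D, (∀ p, 0 ≤ ν p) ∧ ∑ p, ν p = 1)
    (hD_conc : ∀ ν ∈ D, ∀ p, ν p ≤ C * μ p)
    (hD_closed : ∀ ν ∈ D, ∀ σ : X → A,
      (fun p : X × A => ∑ q : X × A,
        ν q * P q.1 q.2 p.1 * (if p.2 = σ p.1 then (1 : ℝ) else 0)) ∈ D) :
    ∀ (Q : X → A → ℝ) (ν : X × A → ℝ), ν ∈ D →
      norm2 ν (fun x a => Q x a - Qstar x a) ≤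
        (Real.sqrt C / (1 - γ)) *
          norm2 μ (fun x a => Q x a - bellmanOpt P r γ Q x a) :=
  value_bound_first_inequality_general X A P hP_nonneg hP_sum r γ hγ0 hγ1 Qstar hQstar μ hμ_nonneg C
    D hD_prob hD_conc hD_closed
end

section
/- (Combined value bound) Under the combined hypotheses: a finite MDP (X, A, P, r, γ) with Bellman optimality operator T and fixed point Q* = T Q*; an abstract MDP (S, A, P_φ, R_φ, γ) with surjective φ : X → S, abstract fixed point Q*_φ = T_φ Q*_φ, rewards 0 ≤ R_φ ≤ R_max, reward consistency |R_φ(φ(x), a) − r(x, a)| ≤ ε_R, and transition consistency Σ_{s'} |P_φ(s' | φ(x), a) − Σ_{x' ∈ φ^{-1}(s')} P(x' | x, a)| ≤ ε_P for all x, a; a probability distribution μ on X × A, C > 0, and a nonempty set D of probability distributions on X × A such that every ν ∈ D satisfies ν(x, a) ≤ C · μ(x, a) pointwise and such that for every ν ∈ D and every σ : X → A the distribution ν_σ(x', a') = Σ_{(x,a)} ν(x, a) P(x' | x, a) · 1[a' = σ(x')] belongs to D — then for every ν ∈ D, the lift [Q*_φ]_M(x, a) = Q*_φ(φ(x), a)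 satisfies ‖[Q*_φ]_M − Q*‖_{2,ν} ≤ (√C / (1 − γ)) · (ε_R + γ · ε_P · R_max / (2(1 − γ))). -/
open Finset

section WeightedSums

variable {ι : Type*} [Fintype ι] {p q f : ι → ℝ} {M : ℝ}

lemma sum_mul_le_of_le (hp : ∀ i, 0 ≤ p i) (hp_sum : ∑ i, p i = 1) (hf : ∀ i, f i ≤ M) :
    ∑ i, p i * f i ≤ M :=
  calc ∑ i, p i * f i ≤ ∑ i, p i * M :=
        sum_le_sum fun i _ => mul_le_mul_of_nonneg_left (hf i) (hp i)
    _ = M := by rw [← sum_mul, hp_sum, one_mul]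

lemma abs_sum_mul_le_of_abs_le (hp : ∀ i, 0 ≤ p i) (hp_sum : ∑ i, p i = 1)
    (hf : ∀ i, |f i| ≤ M) : |∑ i, p i * f i| ≤ M :=
  calc |∑ i, p i * f i| ≤ ∑ i, p i * |f i| := by
        refine (abs_sum_le_sum_abs _ _).trans_eq (sum_congr rfl fun i _ => ?_)
        rw [abs_mul, abs_of_nonneg (hp i)]
    _ ≤ M := sum_mul_le_of_le hp hp_sum hf

lemma abs_sum_mul_sub_sum_mul_le (hpq : ∑ i, p i = ∑ i, q i) {c δ : ℝ}
    (hf : ∀ i, |f i - c| ≤ δ) :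
    |∑ i, p i * f i - ∑ i, q i * f i| ≤ (∑ i, |p i - q i|) * δ := by
  have hcentre : ∑ i, p i * f i - ∑ i, q i * f i = ∑ i, (p i - q i) * (f i - c) := by
    simp only [sub_mul, mul_sub, sum_sub_distrib, ← sum_mul, hpq]
    ring
  rw [hcentre, sum_mul]
  refine (abs_sum_le_sum_abs _ _).trans (sum_le_sum fun i _ => ?_)
  rw [abs_mul]
  exact mul_le_mul_of_nonneg_left (hf i) (abs_nonneg _)

end WeightedSums

lemma abs_sup'_sub_sup'_le {α : Type*} (s : Finset α) (hs : s.Nonempty) (f g : α → ℝ) :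
    |s.sup' hs f - s.sup' hs g| ≤ s.sup' hs fun a => |f a - g a| := by
  have key : ∀ f g : α → ℝ, s.sup' hs f - s.sup' hs g ≤ s.sup' hs fun a => |f a - g a| := by
    intro f g
    rw [sub_le_iff_le_add]
    refine sup'_le _ _ fun a ha => ?_
    have h₁ : f a - g a ≤ s.sup' hs fun a => |f a - g a| :=
      (le_abs_self _).trans (le_sup' (fun a => |f a - g a|) ha)
    have h₂ : g a ≤ s.sup' hs g := le_sup' g ha
    linarith
  refine abs_sub_le_iff.2 ⟨key f g, ?_⟩
  simpa only [abs_sub_comm] using key g f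

lemma le_div_of_le_add_mul_sup' {ι : Type*} [Fintype ι] [Nonempty ι] {g : ι → ℝ} {b γ : ℝ}
    (hγ : γ < 1) (h : ∀ i, g i ≤ b + γ * univ.sup' univ_nonempty g) (i : ι) :
    g i ≤ b / (1 - γ) := by
  obtain ⟨j, -, hj⟩ := exists_mem_eq_sup' univ_nonempty g
  have hsup : (1 - γ) * univ.sup' univ_nonempty g ≤ b := by linarith [h j]
  rw [le_div_iff₀ (by linarith), mul_comm]
  exact (mul_le_mul_of_nonneg_left (le_sup' g (mem_univ i)) (by linarith)).trans hsup

section Bellman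

variable {X A : Type} [Fintype A] [Nonempty A]

def qMax (Q : X → A → ℝ) (x : X) : ℝ :=
  univ.sup' univ_nonempty (Q x)

lemma le_qMax {Q : X → A → ℝ} (x : X) (a : A) : Q x a ≤ qMax Q x :=
  le_sup' (Q x) (mem_univ a)

variable [Fintype X] {P : X → A → X → ℝ} {r : X → A → ℝ} {γ : ℝ} {Q : X → A → ℝ}

lemma bellmanOpt_apply (x : X) (a : A) :
    bellmanOpt P r γ Q x a = r x a + γ * ∑ x', P x a x' * qMax Q x' :=
  rfl

variable [Nonempty X]

lemma le_div_of_bellmanOpt_fixed (hP_nonneg : ∀ x a x', 0 ≤ P x a x')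
    (hP_sum : ∀ x a, ∑ x', P x a x' = 1) (hγ0 : 0 ≤ γ) (hγ1 : γ < 1)
    (hQ : ∀ x a, Q x a = bellmanOpt P r γ Q x a) {hi : ℝ} (hr : ∀ x a, r x a ≤ hi)
    (x : X) (a : A) : Q x a ≤ hi / (1 - γ) := by
  let M := univ.sup' univ_nonempty fun p : X × A => Q p.1 p.2
  refine le_div_of_le_add_mul_sup' (g := fun p : X × A => Q p.1 p.2) hγ1 (fun p => ?_) (x, a)
  have hmax : ∀ x', qMax Q x' ≤ M := fun x' =>
    sup'_le _ _ fun a' _ => le_sup' (fun p : X × A => Q p.1 p.2) (mem_univ (x', a'))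
  rw [hQ, bellmanOpt_apply]
  gcongr
  · exact hr _ _
  · exact sum_mul_le_of_le (hP_nonneg _ _) (hP_sum _ _) hmax

lemma div_le_of_bellmanOpt_fixed (hP_nonneg : ∀ x a x', 0 ≤ P x a x')
    (hP_sum : ∀ x a, ∑ x', P x a x' = 1) (hγ0 : 0 ≤ γ) (hγ1 : γ < 1)
    (hQ : ∀ x a, Q x a = bellmanOpt P r γ Q x a) {lo : ℝ} (hr : ∀ x a, lo ≤ r x a)
    (x : X) (a : A) : lo / (1 - γ) ≤ Q x a := by
  let M := univ.sup' univ_nonempty fun p : X × A => -Q p.1 p.2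
  suffices h : -Q x a ≤ -lo / (1 - γ) by rw [neg_div] at h; linarith
  refine le_div_of_le_add_mul_sup' (g := fun p : X × A => -Q p.1 p.2) hγ1 (fun p => ?_) (x, a)
  have hmax : ∀ x', -qMax Q x' ≤ M := fun x' =>
    (neg_le_neg (le_qMax x' (Classical.arbitrary A))).trans
      (le_sup' (fun p : X × A => -Q p.1 p.2) (mem_univ (x', _)))
  have hsum := sum_mul_le_of_le (hP_nonneg p.1 p.2) (hP_sum p.1 p.2) hmax
  simp only [mul_neg, sum_neg_distrib] at hsum
  rw [hQ, bellmanOpt_apply]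
  nlinarith [hr p.1 p.2]

lemma abs_qMax_sub_le_of_bellmanOpt_fixed (hP_nonneg : ∀ x a x', 0 ≤ P x a x')
    (hP_sum : ∀ x a, ∑ x', P x a x' = 1) (hγ0 : 0 ≤ γ) (hγ1 : γ < 1)
    (hQ : ∀ x a, Q x a = bellmanOpt P r γ Q x a) {Rmax : ℝ} (hr : ∀ x a, 0 ≤ r x a ∧ r x a ≤ Rmax)
    (x : X) : |qMax Q x - Rmax / (2 * (1 - γ))| ≤ Rmax / (2 * (1 - γ)) := by
  have hlo : 0 ≤ qMax Q x := by
    simpa using (div_le_of_bellmanOpt_fixed hP_nonneg hP_sum hγ0 hγ1 hQ (fun x a => (hr x a).1) x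
      (Classical.arbitrary A)).trans (le_qMax x _)
  have hhi : qMax Q x ≤ Rmax / (1 - γ) :=
    sup'_le _ _ fun a _ => le_div_of_bellmanOpt_fixed hP_nonneg hP_sum hγ0 hγ1 hQ
      (fun x a => (hr x a).2) x a
  have hhalf : Rmax / (1 - γ) = 2 * (Rmax / (2 * (1 - γ))) := by
    field_simp
  rw [abs_sub_le_iff]
  constructor <;> linarith

end Bellman

section Abstraction

variable {X A S : Type} [Fintype X] [Fintype S] [DecidableEq S]

def aggregatedKernel (φ : X → S) (P : X → A → X → ℝ) (x : X) (a : A) (s : S) : ℝ :=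
  ∑ x' ∈ univ.filter (fun x' => φ x' = s), P x a x'

lemma sum_aggregatedKernel_mul (φ : X → S) (P : X → A → X → ℝ) (x : X) (a : A) (f : S → ℝ) :
    ∑ s, aggregatedKernel φ P x a s * f s = ∑ x', P x a x' * f (φ x') := by
  rw [← sum_fiberwise univ φ]
  refine sum_congr rfl fun s _ => ?_
  rw [aggregatedKernel, sum_mul]
  exact sum_congr rfl fun x' hx' => by rw [(mem_filter.1 hx').2]

lemma sum_aggregatedKernel (φ : X → S) (P : X → A → X → ℝ) (x : X) (a : A) :
    ∑ s, aggregatedKernel φ P x a s = ∑ x', P x a x' := by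
  simpa using sum_aggregatedKernel_mul φ P x a 1

variable [Fintype A] [Nonempty A] {φ : X → S} {P : X → A → X → ℝ} {r : X → A → ℝ}
  {Pφ : S → A → S → ℝ} {Rφ : S → A → ℝ} {γ : ℝ} {Qstar : X → A → ℝ} {Qφ : S → A → ℝ}
  {εR εP c δ E : ℝ}

lemma abs_lift_sub_le_add_mul (hP_nonneg : ∀ x a x', 0 ≤ P x a x')
    (hP_sum : ∀ x a, ∑ x', P x a x' = 1) (hPφ_sum : ∀ s a, ∑ s', Pφ s a s' = 1) (hγ0 : 0 ≤ γ)
    (hQstar : ∀ x a, Qstar x a = bellmanOpt P r γ Qstar x a)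
    (hQφ : ∀ s a, Qφ s a = bellmanOpt Pφ Rφ γ Qφ s a) (x : X) (a : A)
    (hreward : |Rφ (φ x) a - r x a| ≤ εR)
    (htrans : ∑ s', |Pφ (φ x) a s' - aggregatedKernel φ P x a s'| ≤ εP)
    (hV : ∀ s, |qMax Qφ s - c| ≤ δ) (hE : ∀ x' a', |Qφ (φ x') a' - Qstar x' a'| ≤ E) :
    |Qφ (φ x) a - Qstar x a| ≤ εR + γ * (εP * δ + E) := by
  have hδ : 0 ≤ δ := (abs_nonneg _).trans (hV (φ x))
  have hsplit : Qφ (φ x) a - Qstar x a = (Rφ (φ x) a - r x a)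
      + γ * (∑ s', Pφ (φ x) a s' * qMax Qφ s' - ∑ s', aggregatedKernel φ P x a s' * qMax Qφ s')
      + γ * ∑ x', P x a x' * (qMax Qφ (φ x') - qMax Qstar x') := by
    rw [hQφ, hQstar, bellmanOpt_apply, bellmanOpt_apply, sum_aggregatedKernel_mul]
    simp only [mul_sub, sum_sub_distrib]
    ring
  have htransfer : |∑ s', Pφ (φ x) a s' * qMax Qφ s'
      - ∑ s', aggregatedKernel φ P x a s' * qMax Qφ s'| ≤ εP * δ := by
    refine (abs_sum_mul_sub_sum_mul_le ?_ hV).trans (mul_le_mul_of_nonneg_right htrans hδ)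
    rw [hPφ_sum, sum_aggregatedKernel, hP_sum]
  have hpropagate : |∑ x', P x a x' * (qMax Qφ (φ x') - qMax Qstar x')| ≤ E :=
    abs_sum_mul_le_of_abs_le (hP_nonneg x a) (hP_sum x a) fun x' =>
      (abs_sup'_sub_sup'_le _ _ _ _).trans (sup'_le _ _ fun a' _ => hE x' a')
  set T := ∑ s', Pφ (φ x) a s' * qMax Qφ s' - ∑ s', aggregatedKernel φ P x a s' * qMax Qφ s'
  set U := ∑ x', P x a x' * (qMax Qφ (φ x') - qMax Qstar x')
  calc |Qφ (φ x) a - Qstar x a| ≤ |Rφ (φ x) a - r x a| + |γ * T| + |γ * U| :=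
        hsplit ▸ abs_add_three _ _ _
    _ = |Rφ (φ x) a - r x a| + γ * |T| + γ * |U| := by
        rw [abs_mul, abs_mul, abs_of_nonneg hγ0]
    _ ≤ εR + γ * (εP * δ) + γ * E := by gcongr
    _ = εR + γ * (εP * δ + E) := by ring

lemma abs_lift_sub_le [Nonempty X] (hP_nonneg : ∀ x a x', 0 ≤ P x a x')
    (hP_sum : ∀ x a, ∑ x', P x a x' = 1) (hPφ_sum : ∀ s a, ∑ s', Pφ s a s' = 1) (hγ0 : 0 ≤ γ)
    (hγ1 : γ < 1) (hQstar : ∀ x a, Qstar x a = bellmanOpt P r γ Qstar x a)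
    (hQφ : ∀ s a, Qφ s a = bellmanOpt Pφ Rφ γ Qφ s a)
    (hreward : ∀ x a, |Rφ (φ x) a - r x a| ≤ εR)
    (htrans : ∀ x a, ∑ s', |Pφ (φ x) a s' - aggregatedKernel φ P x a s'| ≤ εP)
    (hV : ∀ s, |qMax Qφ s - c| ≤ δ) (x : X) (a : A) :
    |Qφ (φ x) a - Qstar x a| ≤ (εR + γ * εP * δ) / (1 - γ) := by
  let err := fun p : X × A => |Qφ (φ p.1) p.2 - Qstar p.1 p.2|
  refine le_div_of_le_add_mul_sup' (g := err) hγ1 (fun p => ?_) (x, a)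
  have hE : ∀ x' a', |Qφ (φ x') a' - Qstar x' a'| ≤ univ.sup' univ_nonempty err :=
    fun x' a' => le_sup' err (mem_univ (x', a'))
  have := abs_lift_sub_le_add_mul hP_nonneg hP_sum hPφ_sum hγ0 hQstar hQφ p.1 p.2
    (hreward p.1 p.2) (htrans p.1 p.2) hV hE
  linarith

end Abstraction

lemma one_le_of_le_mul {ι : Type*} [Fintype ι] {ν μ : ι → ℝ} {C : ℝ} (hν_sum : ∑ i, ν i = 1)
    (hμ_sum : ∑ i, μ i = 1) (h : ∀ i, ν i ≤ C * μ i) : 1 ≤ C :=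
  calc 1 = ∑ i, ν i := hν_sum.symm
    _ ≤ ∑ i, C * μ i := sum_le_sum fun i _ => h i
    _ = C := by rw [← mul_sum, hμ_sum, mul_one]

lemma norm2_le_of_abs_le {X A : Type} [Fintype X] [Fintype A] {ν : X × A → ℝ}
    {f : X → A → ℝ} {B : ℝ} (hν_nonneg : ∀ p, 0 ≤ ν p) (hν_sum : ∑ p, ν p = 1)
    (hf : ∀ x a, |f x a| ≤ B) : norm2 ν f ≤ B := by
  obtain ⟨p, -⟩ : (univ : Finset (X × A)).Nonempty :=
    nonempty_of_sum_ne_zero (hν_sum.symm ▸ one_ne_zero)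
  have hB : 0 ≤ B := (abs_nonneg _).trans (hf p.1 p.2)
  refine Real.sqrt_le_iff.2 ⟨hB, sum_mul_le_of_le hν_nonneg hν_sum fun q => ?_⟩
  rw [← sq_abs]
  gcongr
  exact hf q.1 q.2

theorem combined_value_bound_general
    (X A S : Type) [Fintype X] [Fintype A] [Fintype S]
    [Nonempty X] [Nonempty A] [Nonempty S] [DecidableEq S]
    (P : X → A → X → ℝ)
    (hP_nonneg : ∀ x a x', 0 ≤ P x a x')
    (hP_sum : ∀ x a, ∑ x', P x a x' = 1)
    (r : X → A → ℝ) (γ : ℝ) (hγ0 : 0 < γ) (hγ1 : γ < 1)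
    (Qstar : X → A → ℝ)
    (hQstar : ∀ x a, Qstar x a = bellmanOpt P r γ Qstar x a)
    (φ : X → S)
    (Pφ : S → A → S → ℝ)
    (hPφ_nonneg : ∀ s a s', 0 ≤ Pφ s a s')
    (hPφ_sum : ∀ s a, ∑ s', Pφ s a s' = 1)
    (Rφ : S → A → ℝ) (Rmax : ℝ)
    (hRφ : ∀ s a, 0 ≤ Rφ s a ∧ Rφ s a ≤ Rmax)
    (Qφ : S → A → ℝ)
    (hQφ : ∀ s a, Qφ s a = bellmanOpt Pφ Rφ γ Qφ s a)
    (εR εP : ℝ)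
    (hreward : ∀ x a, |Rφ (φ x) a - r x a| ≤ εR)
    (htrans : ∀ x a, ∑ s', |Pφ (φ x) a s'
        - ∑ x' ∈ Finset.univ.filter (fun x' => φ x' = s'), P x a x'| ≤ εP)
    (μ : X × A → ℝ) (hμ_sum : ∑ p, μ p = 1)
    (C : ℝ)
    (D : Set (X × A → ℝ))
    (hD_prob : ∀ ν ∈ D, (∀ p, 0 ≤ ν p) ∧ ∑ p, ν p = 1)
    (hD_conc : ∀ ν ∈ D, ∀ p, ν p ≤ C * μ p) :
    ∀ ν ∈ D,
      norm2 ν (fun x a => Qφ (φ x) a - Qstar x a) ≤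
        (Real.sqrt C / (1 - γ)) * (εR + γ * εP * Rmax / (2 * (1 - γ))) := by
  intro ν hν
  obtain ⟨hν_nonneg, hν_sum⟩ := hD_prob ν hν
  have hV := abs_qMax_sub_le_of_bellmanOpt_fixed hPφ_nonneg hPφ_sum hγ0.le hγ1 hQφ hRφ
  have hsup := abs_lift_sub_le hP_nonneg hP_sum hPφ_sum hγ0.le hγ1 hQstar hQφ hreward htrans hV
  have hnorm := norm2_le_of_abs_le hν_nonneg hν_sum hsup
  have hC : 1 ≤ Real.sqrt C := Real.one_le_sqrt.2 (one_le_of_le_mul hν_sum hμ_sum (hD_conc ν hν))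
  calc _ ≤ _ := hnorm
    _ ≤ Real.sqrt C * _ := le_mul_of_one_le_left ((Real.sqrt_nonneg _).trans hnorm) hC
    _ = _ := by ring

/-- Combined value bound: under reward/transition consistency of the abstract
MDP and the concentratability assumption, for every admissible `ν ∈ D`,
`‖[Q*_φ]_M − Q*‖_{2,ν} ≤ (√C / (1 − γ)) · (ε_R + γ ε_P R_max / (2(1 − γ)))`. -/
theorem combined_value_bound
    (X A S : Type) [Fintype X] [Fintype A] [Fintype S]
    [Nonempty X] [Nonempty A] [Nonempty S] [DecidableEq S] [DecidableEq A]
    (P : X → A → X → ℝ)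
    (hP_nonneg : ∀ x a x', 0 ≤ P x a x')
    (hP_sum : ∀ x a, ∑ x', P x a x' = 1)
    (r : X → A → ℝ) (γ : ℝ) (hγ0 : 0 < γ) (hγ1 : γ < 1)
    (Qstar : X → A → ℝ)
    (hQstar : ∀ x a, Qstar x a = bellmanOpt P r γ Qstar x a)
    (φ : X → S) (hφ_surj : Function.Surjective φ)
    (Pφ : S → A → S → ℝ)
    (hPφ_nonneg : ∀ s a s', 0 ≤ Pφ s a s')
    (hPφ_sum : ∀ s a, ∑ s', Pφ s a s' = 1)
    (Rφ : S → A → ℝ) (Rmax : ℝ)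
    (hRφ : ∀ s a, 0 ≤ Rφ s a ∧ Rφ s a ≤ Rmax)
    (Qφ : S → A → ℝ)
    (hQφ : ∀ s a, Qφ s a = bellmanOpt Pφ Rφ γ Qφ s a)
    (εR εP : ℝ)
    (hreward : ∀ x a, |Rφ (φ x) a - r x a| ≤ εR)
    (htrans : ∀ x a, ∑ s', |Pφ (φ x) a s'
        - ∑ x' ∈ Finset.univ.filter (fun x' => φ x' = s'), P x a x'| ≤ εP)
    (μ : X × A → ℝ) (hμ_nonneg : ∀ p, 0 ≤ μ p) (hμ_sum : ∑ p, μ p = 1)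
    (C : ℝ) (hC : 0 < C)
    (D : Set (X × A → ℝ)) (hD_ne : D.Nonempty)
    (hD_prob : ∀ ν ∈ D, (∀ p, 0 ≤ ν p) ∧ ∑ p, ν p = 1)
    (hD_conc : ∀ ν ∈ D, ∀ p, ν p ≤ C * μ p)
    (hD_closed : ∀ ν ∈ D, ∀ σ : X → A,
      (fun p : X × A => ∑ q : X × A,
        ν q * P q.1 q.2 p.1 * (if p.2 = σ p.1 then (1 : ℝ) else 0)) ∈ D) :
    ∀ ν ∈ D,
      norm2 ν (fun x a => Qφ (φ x) a - Qstar x a) ≤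
        (Real.sqrt C / (1 - γ)) * (εR + γ * εP * Rmax / (2 * (1 - γ))) :=
  combined_value_bound_general X A S P hP_nonneg hP_sum r γ hγ0 hγ1 Qstar hQstar φ Pφ hPφ_nonneg
    hPφ_sum Rφ Rmax hRφ Qφ hQφ εR εP hreward htrans μ hμ_sum C D hD_prob hD_conc
end
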